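/- The stochastic platoon coordination game G^s is an exact potential game: the function Φ(w) = Σ_τ Pr(𝛕 = τ) Φ(w,τ), where Φ(w,τ) = Σ_{t∈ℕ} Σ_{e∈E} r(|C(e,t,w,τ)|, e) − Σ_{i=1}^{N} Λ_i(w^i) with r(n,e) = Σ_{j=1}^{n} R(j,e), is an exact potential for the expected utilities {U^i(w^i,w^{-i}) = Σ_τ Pr(𝛕=τ) U^i(w^i,w^{-i},τ)}_{i∈N}; that is, for every vehicle i, every w'_i, w''_i ∈ W^i, and every w_{-i}, Φ(w'_i,w_{-i}) − Φ(w''_i,w_{-i}) = U^i(w'_i,w_{-i}) − U^i(w''_i,w_{-i}). -/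
import Mathlib


open scoped BigOperators

/-- Departure time of a vehicle from its `(k+1)`-st node (`0`-indexed `k`):
`d 0 = t0 + w 0`, `d (k+1) = d k + tt (path k) (d k) + w (k+1)`. -/
def depart {E : Type*} (tt : E → ℕ → ℕ) (t0 : ℕ) (path : ℕ → E) (w : ℕ → ℕ) : ℕ → ℕ
  | 0 => t0 + w 0
  | k + 1 => depart tt t0 path w k + tt (path k) (depart tt t0 path w k) + w (k + 1)

/-- The platoon set `C(e,t,w,τ)`: vehicles entering edge `e` at time instance `t`. -/
def platoon {E ι : Type*} (len : ι → ℕ) (path : ι → ℕ → E)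
    (tt : E → ℕ → ℕ) (t0 : ι → ℕ) (w : ι → ℕ → ℕ) (e : E) (t : ℕ) : Set ι :=
  {j | ∃ k < len j, path j k = e ∧ depart tt (t0 j) (path j) (w j) k = t}

/-- Vehicle `i`'s utility: total platooning reward along its path minus waiting cost. -/
noncomputable def utility {E ι : Type*} (len : ι → ℕ) (path : ι → ℕ → E)
    (tt : E → ℕ → ℕ) (t0 : ι → ℕ) (R : ℕ → E → ℝ) (Λ : ι → (ℕ → ℕ) → ℝ)
    (w : ι → ℕ → ℕ) (i : ι) : ℝ :=
  (∑ k ∈ Finset.range (len i),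
      R ((platoon len path tt t0 w (path i k)
            (depart tt (t0 i) (path i) (w i) k)).ncard) (path i k))
    - Λ i (w i)

/-- `r(n,e) = ∑_{j=1}^{n} R(j,e)`; in particular `r(0,e) = 0`. -/
noncomputable def rsum {E : Type*} (R : ℕ → E → ℝ) (n : ℕ) (e : E) : ℝ :=
  ∑ j ∈ Finset.Icc 1 n, R j e

/-- The candidate potential
`Φ(w,τ) = ∑_{t∈ℕ} ∑_{e∈E} r(|C(e,t,w,τ)|,e) - ∑_i Λ_i(wⁱ)`. -/
noncomputable def potential {E ι : Type*} [Fintype E] [Fintype ι]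
    (len : ι → ℕ) (path : ι → ℕ → E) (tt : E → ℕ → ℕ) (t0 : ι → ℕ)
    (R : ℕ → E → ℝ) (Λ : ι → (ℕ → ℕ) → ℝ) (w : ι → ℕ → ℕ) : ℝ :=
  (∑' t : ℕ, ∑ e : E, rsum R ((platoon len path tt t0 w e t).ncard) e)
    - ∑ i : ι, Λ i (w i)

lemma depart_strictMono {E : Type*} (tt : E → ℕ → ℕ) (htt : ∀ e t, 0 < tt e t)
    (t0 : ℕ) (path : ℕ → E) (w : ℕ → ℕ) :
    StrictMono (depart tt t0 path w) := by
  apply strictMono_nat_of_lt_succ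
  intro n
  have := htt (path n) (depart tt t0 path w n)
  simp only [depart]
  omega

lemma rsum_succ {E : Type*} (R : ℕ → E → ℝ) (n : ℕ) (e : E) :
    rsum R (n+1) e = rsum R n e + R (n+1) e := by
  simp [rsum, Finset.sum_Icc_succ_top (by omega : 1 ≤ n+1)]

lemma platoon_update_eq {E ι : Type*} [DecidableEq ι] (len : ι → ℕ) (path : ι → ℕ → E)
    (tt : E → ℕ → ℕ) (t0 : ι → ℕ) (i : ι) (wi : ℕ → ℕ) (w : ι → ℕ → ℕ) (e : E) (t : ℕ) :
    platoon len path tt t0 (Function.update w i wi) e t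
    = {j | j ≠ i ∧ j ∈ platoon len path tt t0 w e t}
      ∪ {j | j = i ∧ ∃ k < len i, path i k = e ∧ depart tt (t0 i) (path i) wi k = t} := by
  ext j
  by_cases hj : j = i
  · subst hj
    simp [platoon, Function.update_self]
  · simp [platoon, hj, Function.update_of_ne hj]

open Classical in
lemma ncard_platoon_update {E ι : Type*} [Fintype ι] [DecidableEq ι]
    (len : ι → ℕ) (path : ι → ℕ → E)
    (tt : E → ℕ → ℕ) (t0 : ι → ℕ) (i : ι) (wi : ℕ → ℕ) (w : ι → ℕ → ℕ) (e : E) (t : ℕ) :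
    (platoon len path tt t0 (Function.update w i wi) e t).ncard
    = ({j | j ≠ i ∧ j ∈ platoon len path tt t0 w e t}).ncard
      + (if (∃ k < len i, path i k = e ∧ depart tt (t0 i) (path i) wi k = t) then 1 else 0) := by
  classical
  rw [platoon_update_eq]
  by_cases hit : ∃ k < len i, path i k = e ∧ depart tt (t0 i) (path i) wi k = t
  · have h2 : {j | j = i ∧ ∃ k < len i, path i k = e ∧ depart tt (t0 i) (path i) wi k = t}
        = {i} := by
      ext j; simp [hit]
    rw [h2, if_pos hit, Set.union_singleton,
      Set.ncard_insert_of_notMem (by simp) (Set.toFinite _)]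
  · have h2 : {j | j = i ∧ ∃ k < len i, path i k = e ∧ depart tt (t0 i) (path i) wi k = t}
        = ∅ := by
      ext j; simp [hit]
    rw [h2, if_neg hit, Set.union_empty, add_zero]

open Classical in
lemma sum_hit {E ι : Type*} [Fintype E] [Fintype ι]
    (len : ι → ℕ) (path : ι → ℕ → E)
    (tt : E → ℕ → ℕ) (t0 : ι → ℕ) (R : ℕ → E → ℝ)
    (i : ι) (wi : ℕ → ℕ) (w1 : ι → ℕ → ℕ) (M : ℕ)
    (hM : ∀ k < len i, depart tt (t0 i) (path i) wi k < M)
    (hd : StrictMono (depart tt (t0 i) (path i) wi)) :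
    ∑ t ∈ Finset.range M, ∑ e : E,
        (if (∃ k < len i, path i k = e ∧ depart tt (t0 i) (path i) wi k = t)
          then R ((platoon len path tt t0 w1 e t).ncard) e else 0)
    = ∑ k ∈ Finset.range (len i),
        R ((platoon len path tt t0 w1 (path i k) (depart tt (t0 i) (path i) wi k)).ncard)
          (path i k) := by
  rw [← Finset.sum_product']
  set g : ℕ × E → ℝ := fun p => R ((platoon len path tt t0 w1 p.2 p.1).ncard) p.2 with hg
  set img : Finset (ℕ × E) :=
    (Finset.range (len i)).image (fun k => (depart tt (t0 i) (path i) wi k, path i k)) with himg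
  have hiff : ∀ t e, (∃ k < len i, path i k = e ∧ depart tt (t0 i) (path i) wi k = t)
      ↔ (t, e) ∈ img := by
    intro t e
    simp only [himg, Finset.mem_image, Finset.mem_range, Prod.mk.injEq]
    constructor
    · rintro ⟨k, hk, he, ht⟩; exact ⟨k, hk, ht, he⟩
    · rintro ⟨k, hk, ht, he⟩; exact ⟨k, hk, he, ht⟩
  have hstep : ∀ p ∈ (Finset.range M) ×ˢ (Finset.univ : Finset E),
      (if (∃ k < len i, path i k = p.2 ∧ depart tt (t0 i) (path i) wi k = p.1)
        then R ((platoon len path tt t0 w1 p.2 p.1).ncard) p.2 else 0)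
      = (if p ∈ img then g p else 0) := by
    rintro ⟨t, e⟩ _
    simp only [hiff t e, hg]
  rw [Finset.sum_congr rfl hstep, Finset.sum_ite_mem]
  have hsub : img ⊆ (Finset.range M) ×ˢ (Finset.univ : Finset E) := by
    intro p hp
    simp only [himg, Finset.mem_image, Finset.mem_range] at hp
    obtain ⟨k, hk, rfl⟩ := hp
    simp [Finset.mem_product, Finset.mem_range, hM k hk]
  rw [Finset.inter_eq_right.mpr hsub, himg,
    Finset.sum_image (fun a _ b _ hab => hd.injective (congrArg Prod.fst hab))]

open Classical in
lemma potential_sub_eq {E ι : Type*} [Fintype E] [Fintype ι] [DecidableEq ι]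
    (len : ι → ℕ) (path : ι → ℕ → E)
    (tt : E → ℕ → ℕ) (htt : ∀ e t, 0 < tt e t) (t0 : ι → ℕ)
    (R : ℕ → E → ℝ) (Λ : ι → (ℕ → ℕ) → ℝ)
    (i : ι) (wi' wi'' : ℕ → ℕ) (w : ι → ℕ → ℕ) :
    potential len path tt t0 R Λ (Function.update w i wi')
      - potential len path tt t0 R Λ (Function.update w i wi'')
    = utility len path tt t0 R Λ (Function.update w i wi') i
      - utility len path tt t0 R Λ (Function.update w i wi'') i := by
  set w1 := Function.update w i wi' with hw1
  set w2 := Function.update w i wi'' with hw2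
  have hw1i : w1 i = wi' := Function.update_self i wi' w
  have hw2i : w2 i = wi'' := Function.update_self i wi'' w
  -- a bound on all departure times
  set D : ℕ := Finset.univ.sup (fun j => (Finset.range (len j)).sup
      (fun k => max (depart tt (t0 j) (path j) (w1 j) k)
        (depart tt (t0 j) (path j) (w2 j) k))) with hD
  set M := D + 1 with hM
  have hbound : ∀ j, ∀ k < len j, depart tt (t0 j) (path j) (w1 j) k < M ∧
      depart tt (t0 j) (path j) (w2 j) k < M := by
    intro j k hk
    have h1 : (Finset.range (len j)).sup
        (fun k => max (depart tt (t0 j) (path j) (w1 j) k)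
          (depart tt (t0 j) (path j) (w2 j) k)) ≤ D :=
      Finset.le_sup (f := fun j => (Finset.range (len j)).sup
        (fun k => max (depart tt (t0 j) (path j) (w1 j) k)
          (depart tt (t0 j) (path j) (w2 j) k))) (Finset.mem_univ j)
    have h2 : max (depart tt (t0 j) (path j) (w1 j) k)
        (depart tt (t0 j) (path j) (w2 j) k) ≤ D :=
      le_trans (Finset.le_sup (f := fun k => max (depart tt (t0 j) (path j) (w1 j) k)
        (depart tt (t0 j) (path j) (w2 j) k)) (Finset.mem_range.mpr hk)) h1
    omega
  have hempty : ∀ (wa : ι → ℕ → ℕ),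
      (∀ j, ∀ k < len j, depart tt (t0 j) (path j) (wa j) k < M) →
      ∀ t, M ≤ t → ∀ e : E, platoon len path tt t0 wa e t = ∅ := by
    intro wa hwa t ht e
    rw [Set.eq_empty_iff_forall_notMem]
    rintro j ⟨k, hk, _, hdk⟩
    have := hwa j k hk
    omega
  have htsum : ∀ (wa : ι → ℕ → ℕ),
      (∀ j, ∀ k < len j, depart tt (t0 j) (path j) (wa j) k < M) →
      (∑' t : ℕ, ∑ e : E, rsum R ((platoon len path tt t0 wa e t).ncard) e)
        = ∑ t ∈ Finset.range M, ∑ e : E,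
            rsum R ((platoon len path tt t0 wa e t).ncard) e := by
    intro wa hwa
    apply tsum_eq_sum
    intro t ht
    rw [Finset.mem_range, not_lt] at ht
    apply Finset.sum_eq_zero
    intro e _
    rw [hempty wa hwa t ht e]
    simp [rsum]
  have hΛ : (∑ j : ι, Λ j (w1 j)) - (∑ j : ι, Λ j (w2 j)) = Λ i wi' - Λ i wi'' := by
    rw [← Finset.sum_sub_distrib, Finset.sum_eq_single i]
    · rw [hw1i, hw2i]
    · intro j _ hj
      rw [hw1, hw2, Function.update_of_ne hj, Function.update_of_ne hj, sub_self]
    · intro h; exact absurd (Finset.mem_univ i) h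
  -- per-term difference
  have hterm : ∀ t : ℕ, ∀ e : E,
      rsum R ((platoon len path tt t0 w1 e t).ncard) e
        - rsum R ((platoon len path tt t0 w2 e t).ncard) e
      = (if (∃ k < len i, path i k = e ∧ depart tt (t0 i) (path i) wi' k = t)
            then R ((platoon len path tt t0 w1 e t).ncard) e else 0)
        - (if (∃ k < len i, path i k = e ∧ depart tt (t0 i) (path i) wi'' k = t)
            then R ((platoon len path tt t0 w2 e t).ncard) e else 0) := by
    intro t e
    rw [hw1, hw2, ncard_platoon_update, ncard_platoon_update]
    by_cases h1 : (∃ k < len i, path i k = e ∧ depart tt (t0 i) (path i) wi' k = t) <;>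
      by_cases h2 : (∃ k < len i, path i k = e ∧ depart tt (t0 i) (path i) wi'' k = t) <;>
      simp [h1, h2, rsum_succ]
  have hsm1 : StrictMono (depart tt (t0 i) (path i) wi') :=
    depart_strictMono tt htt _ _ _
  have hsm2 : StrictMono (depart tt (t0 i) (path i) wi'') :=
    depart_strictMono tt htt _ _ _
  have hMi1 : ∀ k < len i, depart tt (t0 i) (path i) wi' k < M := by
    intro k hk; have := (hbound i k hk).1; rwa [hw1i] at this
  have hMi2 : ∀ k < len i, depart tt (t0 i) (path i) wi'' k < M := by
    intro k hk; have := (hbound i k hk).2; rwa [hw2i] at this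
  have key :
      (∑ t ∈ Finset.range M, ∑ e : E, rsum R ((platoon len path tt t0 w1 e t).ncard) e)
        - (∑ t ∈ Finset.range M, ∑ e : E, rsum R ((platoon len path tt t0 w2 e t).ncard) e)
      = (∑ k ∈ Finset.range (len i),
          R ((platoon len path tt t0 w1 (path i k)
              (depart tt (t0 i) (path i) wi' k)).ncard) (path i k))
        - (∑ k ∈ Finset.range (len i),
          R ((platoon len path tt t0 w2 (path i k)
              (depart tt (t0 i) (path i) wi'' k)).ncard) (path i k)) := by
    rw [← Finset.sum_sub_distrib]
    simp_rw [← Finset.sum_sub_distrib]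
    calc ∑ t ∈ Finset.range M, ∑ e : E,
          (rsum R ((platoon len path tt t0 w1 e t).ncard) e
            - rsum R ((platoon len path tt t0 w2 e t).ncard) e)
        = ∑ t ∈ Finset.range M, ∑ e : E,
          ((if (∃ k < len i, path i k = e ∧ depart tt (t0 i) (path i) wi' k = t)
              then R ((platoon len path tt t0 w1 e t).ncard) e else 0)
            - (if (∃ k < len i, path i k = e ∧ depart tt (t0 i) (path i) wi'' k = t)
              then R ((platoon len path tt t0 w2 e t).ncard) e else 0)) := by
          apply Finset.sum_congr rfl; intro t _
          apply Finset.sum_congr rfl; intro e _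
          exact hterm t e
      _ = _ := by
          simp_rw [Finset.sum_sub_distrib]
          rw [sum_hit len path tt t0 R i wi' w1 M hMi1 hsm1,
            sum_hit len path tt t0 R i wi'' w2 M hMi2 hsm2]
  simp only [potential, utility, hw1i, hw2i]
  rw [htsum w1 (fun j k hk => (hbound j k hk).1), htsum w2 (fun j k hk => (hbound j k hk).2)]
  have := hΛ
  have := key
  ring_nf
  ring_nf at key hΛ ⊢
  linarith [key, hΛ]


/-- **Theorem 2 (exact potential, stochastic travel times).**  Travel times and start
times are jointly random: the (finitely many) realizations are indexed by a finite
type `T`, realization `τ` occurs with probability `p τ`, and gives travel times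
`tt τ` and start times `t0 τ`.  The expected potential
`Φ(w) = ∑_τ Pr(𝛕 = τ) Φ(w,τ)` is an exact potential for the expected utilities
`Uⁱ(w) = ∑_τ Pr(𝛕 = τ) Uⁱ(w,τ)`. -/
theorem stochastic_platoon_game_is_exact_potential
    {E ι T : Type*} [Fintype E] [Fintype ι] [DecidableEq ι] [Fintype T]
    (p : T → ℝ) (hp : ∀ τ, 0 ≤ p τ) (hpsum : ∑ τ : T, p τ = 1)
    (len : ι → ℕ) (path : ι → ℕ → E)
    (tt : T → E → ℕ → ℕ) (htt : ∀ τ e t, 0 < tt τ e t) (t0 : T → ι → ℕ)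
    (R : ℕ → E → ℝ) (Λ : ι → (ℕ → ℕ) → ℝ)
    (W : ι → Finset (ℕ → ℕ)) (hW : ∀ i, (W i).Nonempty)
    (i : ι) (wi' wi'' : ℕ → ℕ) (hwi' : wi' ∈ W i) (hwi'' : wi'' ∈ W i)
    (w : ι → ℕ → ℕ) (hw : ∀ j, w j ∈ W j) :
    (∑ τ : T, p τ * potential len path (tt τ) (t0 τ) R Λ (Function.update w i wi'))
        - (∑ τ : T, p τ * potential len path (tt τ) (t0 τ) R Λ (Function.update w i wi''))
      = (∑ τ : T, p τ * utility len path (tt τ) (t0 τ) R Λ (Function.update w i wi') i)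
        - (∑ τ : T, p τ * utility len path (tt τ) (t0 τ) R Λ (Function.update w i wi'') i) := by
  rw [← Finset.sum_sub_distrib, ← Finset.sum_sub_distrib]
  apply Finset.sum_congr rfl
  intro τ _
  rw [← mul_sub, ← mul_sub,
    potential_sub_eq len path (tt τ) (htt τ) (t0 τ) R Λ i wi' wi'' w]
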